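/- Let N ≥ 1, let A ∈ ℝ^{N×N} be a real symmetric matrix such that E − A has eigenvalues 1, 2, …, N (counted with multiplicity), let λ ∈ ℝ with λ ≠ 0, and let c > 0 and t > 0. Then (noting that g(s) := e^{2λs} − 1 + λc² is nonzero of constant sign on [0,t] and the ratios g(t)/g(s) and λc²/g(t) are positive) ∫₀ᵗ e^{−2λ(t−s)} · exp( ln( (e^{2λt} − 1 + λc²)/(e^{2λs} − 1 + λc²) ) · A ) ds = ((1 + e^{−2λt}(λc² − 1))/(2λ)) · (E − A)⁻¹ · ( E − exp( ln( λc²/(e^{2λt} − 1 + λc²) ) · (E − A) ) ). -/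

import Mathlib

/-!
Write `g(s) = e^{2λs} - 1 + λc²` (`shiftedExp lam c s`); `λ g(s) > 0` for `s ≥ 0`, so every
logarithm below is of a positive number. Since `g' = 2λ e^{2λs}`, the integrand is
`(e^{-2λt} / 2λ) g'(s) exp(log (g t / g s) • A)`, and in any real Banach algebra we have
`d/ds [g(s) • exp(log (K / g s) • a)] = g'(s) • (1 - a) * exp(log (K / g s) • a)`.
So if `b * (1 - a) = 1`, then `(e^{-2λt} / 2λ) • b * (g(s) • exp(log (g t / g s) • a))` is
an antiderivative, and evaluating it at `0` and `t` gives the formula. For matrices, `E - A` is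
invertible because its eigenvalues `1, …, N` are nonzero; we compute in the Banach algebra of
matrices with the `L∞` operator norm and read off the entries with continuous linear functionals.
-/

open Polynomial

noncomputable def shiftedExp (lam c s : ℝ) : ℝ := Real.exp (2 * lam * s) - 1 + lam * c ^ 2

theorem shiftedExp_zero (lam c : ℝ) : shiftedExp lam c 0 = lam * c ^ 2 := by
  simp [shiftedExp]

theorem hasDerivAt_shiftedExp (lam c s : ℝ) :
    HasDerivAt (shiftedExp lam c) (2 * lam * Real.exp (2 * lam * s)) s := by
  have h := ((hasDerivAt_id s).const_mul (2 * lam)).exp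
  simp only [mul_one, id] at h
  rw [mul_comm]
  exact (h.sub_const 1).add_const _

section ShiftedExp

variable {lam c : ℝ}

theorem mul_shiftedExp_pos (hlam : lam ≠ 0) (hc : c ≠ 0) {s : ℝ} (hs : 0 ≤ s) :
    0 < lam * shiftedExp lam c s := by
  have hmono : 0 ≤ lam * (Real.exp (2 * lam * s) - 1) := by
    rcases hlam.lt_or_gt with h | h
    · exact mul_nonneg_of_nonpos_of_nonpos h.le
        (sub_nonpos.mpr (Real.exp_le_one_iff.mpr (by nlinarith)))
    · exact mul_nonneg h.le (sub_nonneg.mpr (Real.one_le_exp_iff.mpr (by positivity)))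
  have hconst : 0 < lam * (lam * c ^ 2) := by
    rw [← mul_assoc]
    exact mul_pos (mul_self_pos.mpr hlam) (by positivity)
  unfold shiftedExp
  linarith [mul_add lam (Real.exp (2 * lam * s) - 1) (lam * c ^ 2)]

theorem shiftedExp_ne_zero (hlam : lam ≠ 0) (hc : c ≠ 0) {s : ℝ} (hs : 0 ≤ s) :
    shiftedExp lam c s ≠ 0 :=
  right_ne_zero_of_mul (mul_shiftedExp_pos hlam hc hs).ne'

end ShiftedExp

section BanachAlgebra

variable {𝔸 : Type*} [NormedRing 𝔸] [NormedAlgebra ℝ 𝔸] [CompleteSpace 𝔸] {lam c t : ℝ}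

theorem NormedSpace.exp_smul_one_sub (q : ℝ) (a : 𝔸) :
    NormedSpace.exp (q • (1 - a)) = Real.exp q • NormedSpace.exp ((-q) • a) := by
  -- the library states multiplicativity and continuity of `exp` for `ℚ`-algebras
  let : NormedAlgebra ℚ 𝔸 := NormedAlgebra.restrictScalars ℚ ℝ 𝔸
  have hsplit : q • (1 - a) = algebraMap ℝ 𝔸 q + (-q) • a := by
    rw [Algebra.algebraMap_eq_smul_one, smul_sub, neg_smul, sub_eq_add_neg]
  rw [hsplit, NormedSpace.exp_add_of_commute (Algebra.commutes q _),
    ← NormedSpace.algebraMap_exp_comm, ← Real.exp_eq_exp_ℝ, ← Algebra.smul_def]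

theorem hasDerivAt_smul_exp_log_div_smul {g : ℝ → ℝ} {g' K s : ℝ} (a : 𝔸)
    (hg : HasDerivAt g g' s) (hK : K ≠ 0) (hs : g s ≠ 0) :
    HasDerivAt (fun u => g u • NormedSpace.exp (Real.log (K / g u) • a))
      (g' • ((1 - a) * NormedSpace.exp (Real.log (K / g s) • a))) s := by
  have hlog : HasDerivAt (fun u => Real.log (K / g u)) (-g' / g s) s := by
    refine (((hasDerivAt_const s K).div hg hs).log (div_ne_zero hK hs)).congr_deriv ?_
    rw [Pi.div_apply]
    field_simp
    ring
  have hexp := (hasDerivAt_exp_smul_const' a (Real.log (K / g s))).scomp s hlog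
  refine (hg.smul hexp).congr_deriv ?_
  rw [Function.comp_apply, smul_smul, mul_div_cancel₀ _ hs, sub_mul, one_mul, smul_sub,
    neg_smul, add_comm, ← sub_eq_add_neg]

theorem hasDerivAt_smul_mul_shiftedExp_smul_exp {a b : 𝔸} (hb : b * (1 - a) = 1)
    (hlam : lam ≠ 0) (hc : c ≠ 0) (ht : 0 ≤ t) {s : ℝ} (hs : 0 ≤ s) :
    HasDerivAt (fun u => (Real.exp (-2 * lam * t) / (2 * lam)) • (b * (shiftedExp lam c u •
        NormedSpace.exp (Real.log (shiftedExp lam c t / shiftedExp lam c u) • a))))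
      (Real.exp (-2 * lam * (t - s)) •
        NormedSpace.exp (Real.log (shiftedExp lam c t / shiftedExp lam c s) • a)) s := by
  have h := ((hasDerivAt_smul_exp_log_div_smul a (hasDerivAt_shiftedExp lam c s)
    (shiftedExp_ne_zero hlam hc ht) (shiftedExp_ne_zero hlam hc hs)).const_mul b).const_smul
    (Real.exp (-2 * lam * t) / (2 * lam))
  refine h.congr_deriv ?_
  rw [mul_smul_comm, ← mul_assoc, hb, one_mul, smul_smul]
  congr 1
  rw [show -2 * lam * (t - s) = -2 * lam * t + 2 * lam * s by ring, Real.exp_add]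
  field_simp

theorem continuousOn_exp_smul_exp_log_shiftedExp_div_smul (a : 𝔸) (hlam : lam ≠ 0)
    (hc : c ≠ 0) (ht : 0 ≤ t) :
    ContinuousOn (fun s => Real.exp (-2 * lam * (t - s)) •
        NormedSpace.exp (Real.log (shiftedExp lam c t / shiftedExp lam c s) • a))
      (Set.Icc 0 t) := by
  let : NormedAlgebra ℚ 𝔸 := NormedAlgebra.restrictScalars ℚ ℝ 𝔸
  have hg : Continuous (shiftedExp lam c) := by
    unfold shiftedExp
    fun_prop
  have hne : ∀ s ∈ Set.Icc 0 t, shiftedExp lam c s ≠ 0 := fun s hs =>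
    shiftedExp_ne_zero hlam hc hs.1
  have hlog : ContinuousOn (fun s => Real.log (shiftedExp lam c t / shiftedExp lam c s))
      (Set.Icc 0 t) :=
    (continuousOn_const.div hg.continuousOn hne).log fun s hs =>
      div_ne_zero (hne t ⟨ht, le_rfl⟩) (hne s hs)
  exact (by fun_prop : Continuous fun s => Real.exp (-2 * lam * (t - s))).continuousOn.smul
    (NormedSpace.exp_continuous.comp_continuousOn (hlog.smul continuousOn_const))

theorem integral_exp_smul_exp_log_shiftedExp_div_smul {a b : 𝔸} (hb : b * (1 - a) = 1)
    (hlam : lam ≠ 0) (hc : c ≠ 0) (ht : 0 ≤ t) :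
    ∫ s in (0 : ℝ)..t, Real.exp (-2 * lam * (t - s)) •
        NormedSpace.exp (Real.log (shiftedExp lam c t / shiftedExp lam c s) • a)
      = ((1 + Real.exp (-2 * lam * t) * (lam * c ^ 2 - 1)) / (2 * lam)) •
        (b * (1 - NormedSpace.exp (Real.log (lam * c ^ 2 / shiftedExp lam c t) • (1 - a)))) := by
  rw [intervalIntegral.integral_eq_sub_of_hasDerivAt
    (fun s hs => hasDerivAt_smul_mul_shiftedExp_smul_exp hb hlam hc ht (Set.uIcc_of_le ht ▸ hs).1)
    ((continuousOn_exp_smul_exp_log_shiftedExp_div_smul a hlam hc ht).intervalIntegrable_of_Icc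
      ht)]
  have hg := shiftedExp_ne_zero hlam hc ht
  have hratio : 0 < lam * c ^ 2 / shiftedExp lam c t := by
    rw [← shiftedExp_zero, ← mul_div_mul_left _ _ hlam]
    exact div_pos (mul_shiftedExp_pos hlam hc le_rfl) (mul_shiftedExp_pos hlam hc ht)
  have hcoeff : 1 + Real.exp (-2 * lam * t) * (lam * c ^ 2 - 1)
      = Real.exp (-2 * lam * t) * shiftedExp lam c t := by
    have h : Real.exp (-2 * lam * t) * Real.exp (2 * lam * t) = 1 := by
      rw [← Real.exp_add]
      simp
    rw [shiftedExp]
    linear_combination -h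
  rw [NormedSpace.exp_smul_one_sub, Real.exp_log hratio, ← Real.log_inv, inv_div, hcoeff,
    div_self hg, Real.log_one, zero_smul, NormedSpace.exp_zero, ← shiftedExp_zero lam c]
  simp only [mul_sub, mul_smul_comm, mul_one, smul_sub]
  match_scalars <;> field_simp

end BanachAlgebra

theorem Matrix.det_ne_zero_of_charpoly_eq_prod {n R ι : Type*} [Fintype n] [DecidableEq n]
    [CommRing R] [IsDomain R] {M : Matrix n n R} {s : Finset ι} {r : ι → R}
    (hM : M.charpoly = ∏ i ∈ s, (X - C (r i))) (hr : ∀ i ∈ s, r i ≠ 0) : M.det ≠ 0 := by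
  rw [Matrix.det_eq_sign_charpoly_coeff, hM, coeff_zero_eq_eval_zero, eval_prod]
  simp only [eval_sub, eval_X, eval_C, zero_sub]
  exact mul_ne_zero (pow_ne_zero _ (neg_ne_zero.mpr one_ne_zero))
    (Finset.prod_ne_zero_iff.mpr fun i hi => neg_ne_zero.mpr (hr i hi))

theorem statement18 (N : ℕ) (A : Matrix (Fin N) (Fin N) ℝ)
    (heig : (1 - A).charpoly
      = ∏ k ∈ Finset.range N, (X - C ((k : ℝ) + 1)))
    (lam : ℝ) (hlam : lam ≠ 0) (c t : ℝ) (hc : 0 < c) (ht : 0 < t) :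
    (Matrix.of fun i j =>
        ∫ s in (0:ℝ)..t,
          Real.exp (-2*lam*(t - s)) *
            (NormedSpace.exp
              (Real.log ((Real.exp (2*lam*t) - 1 + lam*c^2)
                / (Real.exp (2*lam*s) - 1 + lam*c^2)) • A)) i j)
      = ((1 + Real.exp (-2*lam*t) * (lam*c^2 - 1))/(2*lam)) •
        ((1 - A)⁻¹ *
          (1 - NormedSpace.exp
            (Real.log (lam*c^2 / (Real.exp (2*lam*t) - 1 + lam*c^2)) • (1 - A)))) := by
  have hdet : IsUnit (1 - A).det :=
    (Matrix.det_ne_zero_of_charpoly_eq_prod heig fun k _ => by positivity).isUnit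
  let : NormedRing (Matrix (Fin N) (Fin N) ℝ) := Matrix.linftyOpNormedRing
  let : NormedAlgebra ℝ (Matrix (Fin N) (Fin N) ℝ) := Matrix.linftyOpNormedAlgebra
  ext i j
  have h := congrArg (Matrix.entryLinearMap ℝ ℝ i j).toContinuousLinearMap
    (integral_exp_smul_exp_log_shiftedExp_div_smul (Matrix.nonsing_inv_mul _ hdet) hlam hc.ne'
      ht.le)
  have hint := (continuousOn_exp_smul_exp_log_shiftedExp_div_smul A hlam hc.ne'
    ht.le).intervalIntegrable_of_Icc (μ := MeasureTheory.volume) ht.le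
  exact (ContinuousLinearMap.intervalIntegral_comp_comm _ hint).trans h
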